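/- arXiv:math/9908040 — 2 statements merged into one kernel-verified Lean document; each statement's English description precedes it below -/
import Mathlib

section
/- The circle product on the Hochschild complex is graded pre-Lie: for all x ∈ C^m(A,A), y ∈ C^n(A,A), z ∈ C^p(A,A), the associator is graded symmetric in the last two arguments with respect to shifted degrees, (x∘y)∘z − x∘(y∘z) = (−1)^{(n−1)(p−1)} ((x∘z)∘y − x∘(z∘y)). -/
namespace Hochschild

/-- Hochschild `n`-cochains `C^n(A,A)` are modeled as functions on sequences
`ℕ → A` (with `a i` playing the role of the `(i+1)`-st argument `a_{i+1}`)
that depend only on the first `n` entries and are `K`-multilinear in them. -/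
def IsCochain (K : Type*) [Field K] {A : Type*} [Ring A] [Algebra K A]
    (n : ℕ) (x : (ℕ → A) → A) : Prop :=
  (∀ a b : ℕ → A, (∀ i, i < n → a i = b i) → x a = x b) ∧
  (∀ (a : ℕ → A) (i : ℕ), i < n → ∀ u v : A,
      x (Function.update a i (u + v)) =
        x (Function.update a i u) + x (Function.update a i v)) ∧
  (∀ (a : ℕ → A) (i : ℕ), i < n → ∀ (c : K) (u : A),
      x (Function.update a i (c • u)) = c • x (Function.update a i u))

variable {A : Type*} [Ring A]

/-- The Hochschild differential of a degree-`n` cochain: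
`(dx)(a_1,…,a_{n+1}) = a_1 x(a_2,…,a_{n+1}) + ∑_{i=1}^n (−1)^i x(a_1,…,a_i a_{i+1},…,a_{n+1})
  − (−1)^n x(a_1,…,a_n) a_{n+1}`. -/
def hd (n : ℕ) (x : (ℕ → A) → A) : (ℕ → A) → A := fun a =>
  a 0 * x (fun j => a (j + 1))
    + ∑ i ∈ Finset.range n, ((-1 : ℤ) ^ (i + 1)) •
        x (fun j => if j < i then a j else if j = i then a i * a (i + 1) else a (j + 1))
    - ((-1 : ℤ) ^ n) • (x a * a n)

/-- The cup product `(x·y)(a_1,…,a_{k+l}) = x(a_1,…,a_k) y(a_{k+1},…,a_{k+l})`;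
the parameter `m` is the degree of the first factor `x`. -/
def cup (m : ℕ) (x y : (ℕ → A) → A) : (ℕ → A) → A := fun a =>
  x a * y (fun j => a (j + m))

/-- In the brace substitution determined by the strictly increasing insertion
positions `j`, the index in the ambient input sequence at which the argument
fed into slot `s` of the outer cochain starts; for an inserted cochain at
slot `j p` this is the number `i_p` of inputs preceding it. -/
def braceOff {n : ℕ} (ys : List (ℕ × ((ℕ → A) → A))) (j : Fin ys.length → Fin n)
    (s : ℕ) : ℕ :=
  (s - (Finset.univ.filter fun q : Fin ys.length => (j q : ℕ) < s).card)
    + ∑ q ∈ Finset.univ.filter (fun q : Fin ys.length => (j q : ℕ) < s), (ys.get q).1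

/-- The brace operation `{x}{y_1,…,y_m}`, where `x` has degree `n` and the `y_p`
are listed together with their degrees:
`{x}{y_1,…,y_m}(a_1,…,a_M) = ∑ (−1)^ε x(a_1,…,a_{i_1}, y_1(a_{i_1+1},…),…)`,
the sum being over all order-preserving substitutions of `y_1,…,y_m` into the
slots of `x`, with `ε = ∑_p (|y_p|−1) i_p`. -/
def brace (n : ℕ) (x : (ℕ → A) → A) (ys : List (ℕ × ((ℕ → A) → A))) :
    (ℕ → A) → A := fun a =>
  ∑ j ∈ Finset.univ.filter
      (fun j : Fin ys.length → Fin n => ∀ p q : Fin ys.length, p < q → j p < j q),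
    ((-1 : ℤ) ^ (∑ p : Fin ys.length, ((ys.get p).1 + 1) * braceOff ys j (j p))) •
      x (fun s =>
        (if (Finset.univ.filter fun p : Fin ys.length => (j p : ℕ) = s) = ∅ then
            a (braceOff ys j s)
          else 0)
        + ∑ p ∈ Finset.univ.filter (fun p : Fin ys.length => (j p : ℕ) = s),
            (ys.get p).2 (fun t => a (t + braceOff ys j s)))

/-- The circle product `x ∘ y := {x}{y}`, with `m = |x|`, `p = |y|`. -/
def circ (m p : ℕ) (x y : (ℕ → A) → A) : (ℕ → A) → A := brace m x [(p, y)]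

/-- The Gerstenhaber bracket `[x,y] := x∘y − (−1)^{(|x|−1)(|y|−1)} y∘x`,
with `m = |x|`, `p = |y|`. -/
def gbr (m p : ℕ) (x y : (ℕ → A) → A) : (ℕ → A) → A := fun a =>
  circ m p x y a - ((-1 : ℤ) ^ ((m + 1) * (p + 1))) • circ p m y x a

end Hochschild

/-!
Expand every circle product as a signed sum over the slot of `x` that receives the inserted
cochain. In `(x∘y)∘z` the cochain `z` lands either inside `y`, and these terms make up
`x∘(y∘z)`, or in a slot of `x` to the left or to the right of `y`. Hence the associator is
`D(z,y) + (−1)^{(n−1)(p−1)} D(y,z)`, where `D(y,z)` sums over the placements of `y` and `z` into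
two slots of `x` with `y` to the left of `z`; the sign comes from commuting the two insertions
when `z` sits right of `y`. This expression is visibly graded symmetric in `y` and `z`.
-/

namespace Hochschild

open Finset

theorem sum_range_sum_range_trichotomy {M : Type*} [AddCommMonoid M] (m n : ℕ)
    (F : ℕ → ℕ → M) :
    ∑ k ∈ range (m + n - 1), ∑ i ∈ range m, F k i =
      ∑ i ∈ range m, ∑ r ∈ range n, F (i + r) i
        + ∑ j ∈ range (m - 1), ∑ k ∈ range (j + 1), F k (j + 1)
        + ∑ j ∈ range (m - 1), ∑ k ∈ range (j + 1), F (j + n) k := by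
  obtain _ | m := m
  · simp
  have hsplit : ∀ i ∈ range (m + 1), ∑ k ∈ range (m + n), F k i =
      ∑ k ∈ range i, F k i + ∑ r ∈ range n, F (i + r) i
        + ∑ s ∈ range (m - i), F (i + n + s) i := by
    intro i hi
    have hm : m + n = i + n + (m - i) := by rw [mem_range] at hi; omega
    rw [hm, sum_range_add, sum_range_add]
  have hafter : ∑ i ∈ range (m + 1), ∑ s ∈ range (m - i), F (i + n + s) i
      = ∑ j ∈ range m, ∑ k ∈ range (j + 1), F (j + n) k := by
    rw [sum_range_succ, Nat.sub_self, sum_range_zero, add_zero, ← sum_range_diag_flip]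
    refine sum_congr rfl fun j _ => sum_congr rfl fun k hk => ?_
    rw [mem_range] at hk
    rw [add_right_comm, Nat.add_sub_cancel' (by omega)]
  rw [Nat.add_right_comm, Nat.add_sub_cancel, Nat.add_sub_cancel, sum_comm, sum_congr rfl hsplit,
    sum_add_distrib, sum_add_distrib, hafter, sum_range_succ' (fun i => ∑ k ∈ range i, F k i)]
  simp only [sum_range_zero, add_zero]
  abel

section Insertion

variable {A : Type*}

def insertAt (n : ℕ) (y : (ℕ → A) → A) (a : ℕ → A) (i : ℕ) : ℕ → A := fun s =>
  if s < i then a s else if s = i then y (fun t => a (t + i)) else a (s - 1 + n)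

theorem insertAt_add_shift (p : ℕ) (z : (ℕ → A) → A) (a : ℕ → A) (i k : ℕ) :
    (fun t => insertAt p z a (i + k) (t + i)) = insertAt p z (fun t => a (t + i)) k := by
  funext t
  simp only [insertAt]
  split_ifs <;> first | rfl | (congr 1; omega) | (congr 1; funext t; congr 1; omega)

theorem insertAt_insertAt_eq_update {n r : ℕ} (hr : r < n) (p : ℕ) (w y z : (ℕ → A) → A)
    (a : ℕ → A) (i : ℕ) :
    insertAt n y (insertAt p z a (i + r)) i =
      Function.update (insertAt (n + p - 1) w a i) i (y (insertAt p z (fun t => a (t + i)) r)) := by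
  funext s
  rcases lt_trichotomy s i with h | rfl | h
  · simp [insertAt, h, h.ne, show s < i + r by omega]
  · rw [Function.update_self, ← insertAt_add_shift]
    simp [insertAt]
  · simp only [insertAt, Function.update_of_ne h.ne', h.not_gt, h.ne', if_false]
    rw [if_neg (by omega), if_neg (by omega)]
    congr 1
    omega

theorem insertAt_insertAt_comm {n : ℕ} (p : ℕ) {y : (ℕ → A) → A}
    (hy : ∀ a b : ℕ → A, (∀ i, i < n → a i = b i) → y a = y b) (z : (ℕ → A) → A)
    (a : ℕ → A) {k j : ℕ} (hkj : k ≤ j) :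
    insertAt n y (insertAt p z a (j + n)) k = insertAt p z (insertAt n y a k) (j + 1) := by
  funext s
  simp only [insertAt]
  split_ifs <;>
    first
      | rfl
      | omega
      | (congr 1; omega)
      | (refine hy _ _ fun t ht => ?_
         split_ifs <;> first | rfl | omega)
      | (congr 1
         funext t
         split_ifs <;> first | rfl | omega | (congr 1; omega))

end Insertion

variable {A : Type*} [Ring A]

def IsCochain.slotAddHom {K : Type*} [Field K] [Algebra K A] {m : ℕ} {x : (ℕ → A) → A}
    (hx : IsCochain K m x) {i : ℕ} (hi : i < m) (g : ℕ → A) : A →+ A :=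
  AddMonoidHom.mk' (fun u => x (Function.update g i u)) (hx.2.1 g i hi)

theorem circ_apply (m n : ℕ) (x y : (ℕ → A) → A) (a : ℕ → A) :
    circ m n x y a = ∑ i ∈ range m, (-1 : ℤ) ^ ((n + 1) * i) • x (insertAt n y a i) := by
  have hlt (p q : Fin 1) : ¬ p < q := by omega
  rw [circ, brace, filter_true_of_mem fun j _ p q => (hlt p q).elim, sum_range]
  refine Fintype.sum_equiv (Equiv.funUnique (Fin 1) (Fin m)) _ _ fun j => ?_
  have hoff (s : ℕ) : braceOff [(n, y)] j s = if (j 0 : ℕ) < s then s - 1 + n else s := by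
    by_cases h : (j 0 : ℕ) < s <;> simp [braceOff, filter_singleton, h]
  congr 2
  · simp [hoff]
  · funext s
    rcases lt_trichotomy (j 0 : ℕ) s with h | h | h
    · simp [insertAt, filter_singleton, hoff, h, h.ne, h.ne', h.not_gt]
    · simp [insertAt, filter_singleton, hoff, h]
    · simp [insertAt, filter_singleton, hoff, h, h.ne', h.not_gt]

theorem circ_circ_apply (m n p : ℕ) (x y z : (ℕ → A) → A) (a : ℕ → A) :
    circ (m + n - 1) p (circ m n x y) z a =
      ∑ k ∈ range (m + n - 1), ∑ i ∈ range m,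
        (-1 : ℤ) ^ ((p + 1) * k + (n + 1) * i) • x (insertAt n y (insertAt p z a k) i) := by
  simp only [circ_apply, smul_sum, smul_smul, ← pow_add]

theorem circ_circ_right_apply {K : Type*} [Field K] [Algebra K A] {m : ℕ} (n p : ℕ)
    {x : (ℕ → A) → A} (hx : IsCochain K m x) (y z : (ℕ → A) → A) (a : ℕ → A) :
    circ m (n + p - 1) x (circ n p y z) a =
      ∑ i ∈ range m, ∑ r ∈ range n, (-1 : ℤ) ^ ((p + 1) * (i + r) + (n + 1) * i) •
        x (insertAt n y (insertAt p z a (i + r)) i) := by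
  rw [circ_apply]
  refine sum_congr rfl fun i hi => ?_
  set g := insertAt (n + p - 1) (circ n p y z) a i
  have hgi : g i = ∑ r ∈ range n,
      (-1 : ℤ) ^ ((p + 1) * r) • y (insertAt p z (fun t => a (t + i)) r) := by
    simp [g, insertAt, circ_apply]
  have hxg : x g = hx.slotAddHom (mem_range.1 hi) g (g i) := by
    simp [IsCochain.slotAddHom]
  rw [hxg, hgi, map_sum, smul_sum]
  refine sum_congr rfl fun r hr => ?_
  rw [map_zsmul, smul_smul, ← pow_add,
    insertAt_insertAt_eq_update (mem_range.1 hr) p (circ n p y z)]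
  have hnp : n + p - 1 + 1 = n + p := by have := mem_range.1 hr; omega
  rw [hnp, show (p + 1) * (i + r) + (n + 1) * i = (n + p) * i + (p + 1) * r + 2 * i by ring,
    pow_add _ _ (2 * i), (even_two_mul i).neg_one_pow, mul_one]
  rfl

/-- `y` in slot `k` and `z` in slot `j + 1` of `x`, with the sign of this term in `(x∘z)∘y`. -/
def disjointInsertions (m n p : ℕ) (x y z : (ℕ → A) → A) (a : ℕ → A) : A :=
  ∑ j ∈ range (m - 1), ∑ k ∈ range (j + 1),
    (-1 : ℤ) ^ ((n + 1) * k + (p + 1) * (j + 1)) • x (insertAt p z (insertAt n y a k) (j + 1))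

theorem circ_circ_sub_circ_circ {K : Type*} [Field K] [Algebra K A] {m n p : ℕ}
    {x y : (ℕ → A) → A} (hx : IsCochain K m x) (hy : IsCochain K n y) (z : (ℕ → A) → A)
    (a : ℕ → A) :
    circ (m + n - 1) p (circ m n x y) z a - circ m (n + p - 1) x (circ n p y z) a =
      disjointInsertions m p n x z y a
        + (-1 : ℤ) ^ ((n + 1) * (p + 1)) • disjointInsertions m n p x y z a := by
  have hcommute : ∑ j ∈ range (m - 1), ∑ k ∈ range (j + 1),
      (-1 : ℤ) ^ ((p + 1) * (j + n) + (n + 1) * k) • x (insertAt n y (insertAt p z a (j + n)) k)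
        = (-1 : ℤ) ^ ((n + 1) * (p + 1)) • disjointInsertions m n p x y z a := by
    rw [disjointInsertions, smul_sum]
    refine sum_congr rfl fun j _ => ?_
    rw [smul_sum]
    refine sum_congr rfl fun k hk => ?_
    rw [insertAt_insertAt_comm p hy.1 z a (Nat.lt_succ_iff.1 (mem_range.1 hk)), smul_smul,
      ← pow_add, show (n + 1) * (p + 1) + ((n + 1) * k + (p + 1) * (j + 1))
        = (p + 1) * (j + n) + (n + 1) * k + 2 * (p + 1) by ring,
      pow_add _ _ (2 * (p + 1)), (even_two_mul _).neg_one_pow, mul_one]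
  rw [circ_circ_apply, sum_range_sum_range_trichotomy, circ_circ_right_apply n p hx, hcommute,
    add_sub_right_comm, add_sub_cancel_left]
  rfl

/-- The circle product on the Hochschild complex is graded
pre-Lie: for all `x ∈ C^m(A,A)`, `y ∈ C^n(A,A)`, `z ∈ C^p(A,A)`, the associator
is graded symmetric in the last two arguments with respect to shifted degrees:
`(x∘y)∘z − x∘(y∘z) = (−1)^{(n−1)(p−1)} ((x∘z)∘y − x∘(z∘y))`. -/
theorem circ_graded_pre_lie
    {K A : Type*} [Field K] [Ring A] [Algebra K A]
    (m n p : ℕ) (x y z : (ℕ → A) → A)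
    (hx : IsCochain K m x) (hy : IsCochain K n y) (hz : IsCochain K p z) :
    (fun a => circ (m + n - 1) p (circ m n x y) z a
        - circ m (n + p - 1) x (circ n p y z) a)
      = fun a => ((-1 : ℤ) ^ ((n + 1) * (p + 1))) •
          (circ (m + p - 1) n (circ m p x z) y a
            - circ m (p + n - 1) x (circ p n z y) a) := by
  funext a
  have hsign : ((-1 : ℤ) ^ ((n + 1) * (p + 1))) * (-1 : ℤ) ^ ((p + 1) * (n + 1)) = 1 := by
    rw [mul_comm (p + 1), ← pow_add, ← two_mul, (even_two_mul _).neg_one_pow]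
  rw [circ_circ_sub_circ_circ hx hy z a, circ_circ_sub_circ_circ hx hz y a, smul_add, smul_smul,
    hsign, one_smul, add_comm]

end Hochschild
end

section
/- The Gerstenhaber bracket satisfies the graded Jacobi identity with respect to shifted degrees: for all x ∈ C^m(A,A), y ∈ C^n(A,A), z ∈ C^p(A,A), [x,[y,z]] = [[x,y],z] + (−1)^{(m−1)(n−1)} [y,[x,z]]. Together with the graded antisymmetry [x,y] = −(−1)^{(m−1)(n−1)}[y,x], this makes the desuspended Hochschild complex C^{•+1}(A,A) a graded Lie algebra. -/
namespace Hochschild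

variable {A : Type*} [Ring A]

set_option linter.unusedSectionVars false
set_option linter.unusedVariables false
set_option maxHeartbeats 1000000

section AuxGerst

-- sign helpers
lemma negpow_mod_two (a : ℕ) : ((-1 : ℤ)) ^ a = (-1) ^ (a % 2) := by
  conv_lhs => rw [← Nat.div_add_mod a 2]
  rw [pow_add, pow_mul, neg_one_sq, one_pow, one_mul]

lemma negpow_congr {a b : ℕ} (h : a % 2 = b % 2) : ((-1 : ℤ)) ^ a = (-1) ^ b := by
  rw [negpow_mod_two a, negpow_mod_two b, h]

lemma negpow_add_two_mul (e c : ℕ) : ((-1 : ℤ)) ^ (e + 2 * c) = (-1) ^ e := by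
  rw [pow_add, pow_mul, neg_one_sq, one_pow, mul_one]

lemma negpow_one' {e : ℕ} (h : e % 2 = 1) : ((-1 : ℤ)) ^ e = -1 := by
  rw [negpow_mod_two, h, pow_one]

lemma negpow_zero' {e : ℕ} (h : e % 2 = 0) : ((-1 : ℤ)) ^ e = 1 := by
  rw [negpow_mod_two, h, pow_zero]

lemma sgn_tab {α β r s : ℕ} (hα : α % 2 = r) (hβ : β % 2 = s) :
    ((-1 : ℤ)) ^ ((α + 1) * (β + 1)) = if r = 0 ∧ s = 0 then -1 else 1 := by
  have hr : r = 0 ∨ r = 1 := by omega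
  have hs : s = 0 ∨ s = 1 := by omega
  rcases hr with rfl | rfl <;> rcases hs with rfl | rfl <;> simp only [if_pos, if_neg,
    and_self, true_and, and_true, one_ne_zero, and_false, false_and, if_false, if_true]
  · exact negpow_one' (by rw [Nat.mul_mod, show (α+1)%2 = 1 by omega, show (β+1)%2 = 1 by omega])
  · exact negpow_zero' (by rw [Nat.mul_mod, show (α+1)%2 = 1 by omega, show (β+1)%2 = 0 by omega])
  · exact negpow_zero' (by rw [Nat.mul_mod, show (α+1)%2 = 0 by omega]; simp)
  · exact negpow_zero' (by rw [Nat.mul_mod, show (α+1)%2 = 0 by omega]; simp)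

/-- slot-substitution: value `v` in slot `i`, later slots shifted by `q-1`. -/
def insv (q i : ℕ) (a : ℕ → A) (v : A) : ℕ → A := fun s =>
  if s < i then a s else if s = i then v else a (s + q - 1)

/-- insertion of cochain `w` (degree `q`) into slot `i`. -/
def ins (q i : ℕ) (w : (ℕ → A) → A) (a : ℕ → A) : ℕ → A :=
  insv q i a (w (fun t => a (t + i)))

lemma circ_eq (m q : ℕ) (x w : (ℕ → A) → A) (a : ℕ → A) :
    circ m q x w a
      = ∑ i ∈ Finset.range m, ((-1 : ℤ) ^ ((q + 1) * i)) • x (ins q i w a) := by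
  unfold circ brace
  have hlen : 0 < List.length [(q, w)] := by simp
  set d : Fin (List.length [(q, w)]) := ⟨0, hlen⟩ with hd
  have hallp : ∀ pp : Fin (List.length [(q, w)]), pp = d := by
    intro pp
    have h1 := pp.isLt
    simp only [List.length_cons, List.length_nil] at h1
    have h2 : (pp : ℕ) = 0 := by omega
    exact Fin.ext (by rw [h2])
  have huniv : (Finset.univ : Finset (Fin (List.length [(q, w)]))) = {d} :=
    Finset.eq_singleton_iff_unique_mem.mpr ⟨Finset.mem_univ _, fun xx _ => hallp xx⟩
  refine Finset.sum_bij' (i := fun j _ => ((j d : ℕ)))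
    (j := fun i hi => fun _ => ⟨i, Finset.mem_range.mp hi⟩) ?_ ?_ ?_ ?_ ?_
  · intro j _; exact Finset.mem_range.mpr (j d).isLt
  · intro i _
    refine Finset.mem_filter.mpr ⟨Finset.mem_univ _, ?_⟩
    intro pp qq hpq
    rw [hallp pp, hallp qq] at hpq
    exact absurd hpq (lt_irrefl _)
  · intro j _
    funext pp
    rw [hallp pp]
  · intro i _; rfl
  · intro j _
    have hjp : ∀ pp, j pp = j d := fun pp => by rw [hallp pp]
    set v : ℕ := (j d : ℕ) with hv
    have hoff : ∀ s, braceOff [(q, w)] j s = if v < s then s - 1 + q else s := by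
      intro s
      unfold braceOff
      simp only [hjp]
      by_cases h : v < s
      · rw [Finset.filter_true_of_mem (fun _ _ => h), if_pos h, huniv,
          Finset.card_singleton, Finset.sum_singleton]
        rfl
      · rw [Finset.filter_false_of_mem (fun _ _ => h), if_neg h]
        simp
    have hsign : (∑ pp : Fin (List.length [(q, w)]),
        ((List.get [(q, w)] pp).1 + 1) * braceOff [(q, w)] j (j pp))
        = (q + 1) * v := by
      rw [huniv, Finset.sum_singleton, hoff]
      rw [if_neg (lt_irrefl v)]
      rfl
    rw [hsign]
    congr 1
    congr 1
    funext s
    simp only [hjp, hoff]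
    rcases lt_trichotomy s v with h | h | h
    · rw [Finset.filter_false_of_mem (fun _ _ => by omega)]
      rw [if_pos rfl, if_neg (by omega : ¬ v < s)]
      simp only [Finset.sum_empty, add_zero]
      show a s = ins q v w a s
      simp [ins, insv, h]
    · rw [Finset.filter_true_of_mem (fun _ _ => by omega)]
      rw [if_neg (by
        intro hemp
        have hmem : d ∈ (Finset.univ : Finset (Fin (List.length [(q, w)]))) :=
          Finset.mem_univ _
        rw [hemp] at hmem
        exact absurd hmem (Finset.notMem_empty _))]
      rw [huniv, Finset.sum_singleton, if_neg (by omega : ¬ v < s)]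
      show 0 + w (fun t => a (t + s)) = ins q v w a s
      simp only [ins, insv, zero_add]
      rw [if_neg (by omega : ¬ s < v), if_pos h, h]
    · rw [Finset.filter_false_of_mem (fun _ _ => by omega)]
      rw [if_pos rfl, if_pos h]
      simp only [Finset.sum_empty, add_zero]
      show a (s - 1 + q) = ins q v w a s
      rw [show ins q v w a s = a (s + q - 1) from by
        simp only [ins, insv]
        rw [if_neg (by omega : ¬ s < v), if_neg (by omega : ¬ s = v)]]
      congr 1; omega

lemma insv_lt {q i s : ℕ} (h : s < i) (a : ℕ → A) (v : A) : insv q i a v s = a s := by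
  simp [insv, h]

lemma insv_self (q i : ℕ) (a : ℕ → A) (v : A) : insv q i a v i = v := by
  simp [insv]

lemma insv_gt {q i s : ℕ} (h : i < s) (a : ℕ → A) (v : A) : insv q i a v s = a (s + q - 1) := by
  simp only [insv]
  rw [if_neg (by omega), if_neg (by omega)]

lemma ins_lt {q i s : ℕ} (h : s < i) (w : (ℕ → A) → A) (a : ℕ → A) :
    ins q i w a s = a s := insv_lt h _ _

lemma ins_self (q i : ℕ) (w : (ℕ → A) → A) (a : ℕ → A) :
    ins q i w a i = w (fun t => a (t + i)) := insv_self _ _ _ _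

lemma ins_gt {q i s : ℕ} (h : i < s) (w : (ℕ → A) → A) (a : ℕ → A) :
    ins q i w a s = a (s + q - 1) := insv_gt h _ _

section WithK
variable {K : Type*} [Field K] [Algebra K A]

lemma insv_eq_update (q i : ℕ) (a : ℕ → A) (v u : A) :
    insv q i a v = Function.update (insv q i a u) i v := by
  funext s
  rcases eq_or_ne s i with rfl | h
  · rw [Function.update_self, insv_self]
  · rw [Function.update_of_ne h]
    rcases lt_or_ge s i with h1 | h1
    · rw [insv_lt h1, insv_lt h1]
    · rw [insv_gt (by omega), insv_gt (by omega)]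

/-- additivity of a cochain in one slot, packaged as an `AddMonoidHom`. -/
def insvHom (x : (ℕ → A) → A) {m : ℕ} (hx : IsCochain K m x) (q i : ℕ) (him : i < m)
    (a : ℕ → A) : A →+ A :=
  AddMonoidHom.mk' (fun v => x (insv q i a v)) (fun u v => by
    show x (insv q i a (u + v)) = x (insv q i a u) + x (insv q i a v)
    rw [insv_eq_update q i a (u + v) 0, insv_eq_update q i a u 0, insv_eq_update q i a v 0]
    exact hx.2.1 _ i him u v)

lemma insvHom_apply (x : (ℕ → A) → A) {m : ℕ} (hx : IsCochain K m x) (q i : ℕ)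
    (him : i < m) (a : ℕ → A) (v : A) : insvHom x hx q i him a v = x (insv q i a v) := rfl

lemma x_ins (x : (ℕ → A) → A) {m : ℕ} (hx : IsCochain K m x) (q i : ℕ) (him : i < m)
    (w : (ℕ → A) → A) (a : ℕ → A) :
    x (ins q i w a) = insvHom x hx q i him a (w (fun t => a (t + i))) := rfl

lemma circ_right_zero {m : ℕ} (q : ℕ) {x : (ℕ → A) → A} (hx : IsCochain K m x)
    {v : (ℕ → A) → A} (hv : ∀ b, v b = 0) (a : ℕ → A) : circ m q x v a = 0 := by
  rw [circ_eq]
  refine Finset.sum_eq_zero fun i hi => ?_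
  rw [x_ins x hx q i (Finset.mem_range.mp hi) v a, hv, map_zero, smul_zero]

lemma circ_zero_outer (q : ℕ) (u w : (ℕ → A) → A) (b : ℕ → A) : circ 0 q u w b = 0 := by
  rw [circ_eq]; simp

lemma circ_left_sub (M q : ℕ) (F G : (ℕ → A) → A) (c : ℤ) (w : (ℕ → A) → A) (a : ℕ → A) :
    circ M q (fun b => F b - c • G b) w a = circ M q F w a - c • circ M q G w a := by
  rw [circ_eq, circ_eq, circ_eq, Finset.smul_sum, ← Finset.sum_sub_distrib]
  refine Finset.sum_congr rfl fun i _ => ?_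
  rw [smul_sub, smul_comm]

lemma circ_right_sub {m : ℕ} (q : ℕ) {x : (ℕ → A) → A} (hx : IsCochain K m x)
    (F G : (ℕ → A) → A) (c : ℤ) (a : ℕ → A) :
    circ m q x (fun b => F b - c • G b) a = circ m q x F a - c • circ m q x G a := by
  rw [circ_eq, circ_eq, circ_eq, Finset.smul_sum, ← Finset.sum_sub_distrib]
  refine Finset.sum_congr rfl fun i hi => ?_
  have him := Finset.mem_range.mp hi
  rw [x_ins x hx q i him _ a, x_ins x hx q i him F a, x_ins x hx q i him G a]
  rw [map_sub, map_zsmul, smul_sub, smul_comm]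

/-- both inserted separately; third argument at the lower slot `k`. -/
def PP (m n p : ℕ) (x y z : (ℕ → A) → A) (a : ℕ → A) : A :=
  ∑ i ∈ Finset.range m, ∑ k ∈ Finset.range i,
    ((-1 : ℤ) ^ ((p + 1) * k + (n + 1) * i)) • x (ins n i y (ins p k z a))

lemma PP_zero (n p : ℕ) (x y z : (ℕ → A) → A) (a : ℕ → A) : PP 0 n p x y z a = 0 := by
  simp [PP]

lemma keyEq1 {n p l i : ℕ} (hl : l < n) (y z : (ℕ → A) → A) (a : ℕ → A) :
    insv (n + p - 1) i a (y (ins p l z (fun t => a (t + i))))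
      = ins n i y (ins p (i + l) z a) := by
  funext s
  rcases lt_trichotomy s i with h | heq | h
  · rw [insv_lt h, ins_lt h, ins_lt (show s < i + l by omega)]
  · subst heq
    rw [insv_self, ins_self]
    congr 1
    funext t
    rcases lt_trichotomy t l with ht | heq2 | ht
    · rw [ins_lt ht, ins_lt (show t + s < s + l by omega)]
    · subst heq2
      rw [ins_self, show t + s = s + t from by omega, ins_self]
      congr 1
      funext u
      congr 1
      omega
    · rw [ins_gt ht, ins_gt (show s + l < t + s by omega)]
      congr 1
      omega
  · rw [insv_gt h, ins_gt h, ins_gt (show i + l < s + n - 1 by omega)]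
    congr 1
    omega

lemma keyEq2 {n p i k : ℕ} {y : (ℕ → A) → A}
    (hy1 : ∀ a b : ℕ → A, (∀ t, t < n → a t = b t) → y a = y b)
    (hik : i < k) (z : (ℕ → A) → A) (a : ℕ → A) :
    ins n i y (ins p (k + n - 1) z a) = ins p k z (ins n i y a) := by
  funext s
  rcases lt_trichotomy s i with h | heq | h
  · rw [ins_lt h, ins_lt (show s < k + n - 1 by omega), ins_lt (show s < k by omega), ins_lt h]
  · subst heq
    rw [ins_self, ins_lt hik, ins_self]
    apply hy1
    intro t ht
    rw [ins_lt (show t + s < k + n - 1 by omega)]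
  · rcases lt_trichotomy s k with h2 | heq2 | h2
    · rw [ins_gt h, ins_lt (show s + n - 1 < k + n - 1 by omega), ins_lt h2, ins_gt h]
    · subst heq2
      rw [ins_gt h, ins_self, ins_self]
      congr 1
      funext u
      rw [ins_gt (show i < u + s by omega)]
      congr 1
      omega
    · rw [ins_gt h, ins_gt (show k + n - 1 < s + n - 1 by omega), ins_gt h2,
        ins_gt (show i < s + p - 1 by omega)]
      congr 1
      omega

lemma sum1_eq {m : ℕ} {x : (ℕ → A) → A} (hx : IsCochain K m x) (n p : ℕ)
    (y z : (ℕ → A) → A) (a : ℕ → A) :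
    circ m (n + p - 1) x (circ n p y z) a
      = ∑ i ∈ Finset.range m, ∑ l ∈ Finset.range n,
          ((-1 : ℤ) ^ ((n + p) * i + (p + 1) * l)) • x (ins n i y (ins p (i + l) z a)) := by
  rw [circ_eq]
  refine Finset.sum_congr rfl fun i hi => ?_
  have him := Finset.mem_range.mp hi
  rw [x_ins x hx _ i him _ a, circ_eq n p y z, map_sum, Finset.smul_sum]
  refine Finset.sum_congr rfl fun l hl => ?_
  have hln := Finset.mem_range.mp hl
  rw [map_zsmul, insvHom_apply, keyEq1 hln, smul_smul, ← pow_add,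
    show n + p - 1 + 1 = n + p from by omega]

lemma tri (m : ℕ) (f : ℕ → ℕ → A) :
    ∑ i ∈ Finset.range m, ∑ k ∈ Finset.Ico (i + 1) m, f i k
      = ∑ k ∈ Finset.range m, ∑ i ∈ Finset.range k, f i k :=
  Finset.sum_comm' (by
    intro i k
    simp only [Finset.mem_range, Finset.mem_Ico]
    omega)

end WithK

section LemA
variable {K : Type*} [Field K] [Algebra K A]

lemma lemA {m : ℕ} {x : (ℕ → A) → A} (hx : IsCochain K m x) (n p : ℕ)
    {y : (ℕ → A) → A} (hy1 : ∀ a b : ℕ → A, (∀ t, t < n → a t = b t) → y a = y b)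
    (z : (ℕ → A) → A) (a : ℕ → A) :
    circ (m + n - 1) p (circ m n x y) z a
      = circ m (n + p - 1) x (circ n p y z) a + PP m n p x y z a
        + ((-1 : ℤ) ^ ((n + 1) * (p + 1))) • PP m p n x z y a := by
  have step1 : circ (m + n - 1) p (circ m n x y) z a
      = ∑ i ∈ Finset.range m, ∑ k ∈ Finset.range (m + n - 1),
          ((-1 : ℤ) ^ ((p + 1) * k + (n + 1) * i)) • x (ins n i y (ins p k z a)) := by
    rw [circ_eq]
    rw [show (∑ k ∈ Finset.range (m + n - 1),
        ((-1 : ℤ) ^ ((p + 1) * k)) • circ m n x y (ins p k z a))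
        = ∑ k ∈ Finset.range (m + n - 1), ∑ i ∈ Finset.range m,
            ((-1 : ℤ) ^ ((p + 1) * k + (n + 1) * i)) • x (ins n i y (ins p k z a)) from
      Finset.sum_congr rfl fun k _ => by
        rw [circ_eq, Finset.smul_sum]
        exact Finset.sum_congr rfl fun i _ => by rw [smul_smul, ← pow_add]]
    exact Finset.sum_comm
  have split : ∀ i ∈ Finset.range m,
      (∑ k ∈ Finset.range (m + n - 1),
        ((-1 : ℤ) ^ ((p + 1) * k + (n + 1) * i)) • x (ins n i y (ins p k z a)))
      = ((∑ k ∈ Finset.range i,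
            ((-1 : ℤ) ^ ((p + 1) * k + (n + 1) * i)) • x (ins n i y (ins p k z a)))
        + ∑ k ∈ Finset.Ico i (i + n),
            ((-1 : ℤ) ^ ((p + 1) * k + (n + 1) * i)) • x (ins n i y (ins p k z a)))
        + ∑ k ∈ Finset.Ico (i + n) (m + n - 1),
            ((-1 : ℤ) ^ ((p + 1) * k + (n + 1) * i)) • x (ins n i y (ins p k z a)) := by
    intro i hi
    have him := Finset.mem_range.mp hi
    rw [Finset.range_eq_Ico, Finset.range_eq_Ico, Finset.sum_Ico_consecutive _ (Nat.zero_le i)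
      (by omega : i ≤ i + n), Finset.sum_Ico_consecutive _ (by omega : (0:ℕ) ≤ i + n)
      (by omega : i + n ≤ m + n - 1)]
  rw [step1, Finset.sum_congr rfl split, Finset.sum_add_distrib, Finset.sum_add_distrib]
  have hlow : (∑ i ∈ Finset.range m, ∑ k ∈ Finset.range i,
      ((-1 : ℤ) ^ ((p + 1) * k + (n + 1) * i)) • x (ins n i y (ins p k z a)))
      = PP m n p x y z a := rfl
  have hmid : (∑ i ∈ Finset.range m, ∑ k ∈ Finset.Ico i (i + n),
      ((-1 : ℤ) ^ ((p + 1) * k + (n + 1) * i)) • x (ins n i y (ins p k z a)))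
      = circ m (n + p - 1) x (circ n p y z) a := by
    rw [sum1_eq hx n p y z a]
    refine Finset.sum_congr rfl fun i hi => ?_
    rw [Finset.sum_Ico_eq_sum_range, show i + n - i = n from by omega]
    refine Finset.sum_congr rfl fun l hl => ?_
    rw [show (p + 1) * (i + l) + (n + 1) * i = ((n + p) * i + (p + 1) * l) + 2 * i from by ring,
      negpow_add_two_mul]
  have hup : (∑ i ∈ Finset.range m, ∑ k ∈ Finset.Ico (i + n) (m + n - 1),
      ((-1 : ℤ) ^ ((p + 1) * k + (n + 1) * i)) • x (ins n i y (ins p k z a)))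
      = ((-1 : ℤ) ^ ((n + 1) * (p + 1))) • PP m p n x z y a := by
    have reidx : ∀ i ∈ Finset.range m,
        (∑ k ∈ Finset.Ico (i + n) (m + n - 1),
          ((-1 : ℤ) ^ ((p + 1) * k + (n + 1) * i)) • x (ins n i y (ins p k z a)))
        = ∑ k ∈ Finset.Ico (i + 1) m, ((-1 : ℤ) ^ ((n + 1) * (p + 1))) •
            (((-1 : ℤ) ^ ((n + 1) * i + (p + 1) * k)) • x (ins p k z (ins n i y a))) := by
      intro i _
      refine Finset.sum_nbij' (i := fun k => k - n + 1) (j := fun k => k + n - 1)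
        ?_ ?_ ?_ ?_ ?_
      · intro k hk
        rw [Finset.mem_Ico] at hk ⊢
        omega
      · intro k hk
        rw [Finset.mem_Ico] at hk ⊢
        omega
      · intro k hk
        rw [Finset.mem_Ico] at hk
        omega
      · intro k hk
        rw [Finset.mem_Ico] at hk
        omega
      · intro k hk
        rw [Finset.mem_Ico] at hk
        obtain ⟨t, rfl⟩ : ∃ t, k = i + n + t := ⟨k - (i + n), by omega⟩
        rw [show i + n + t - n + 1 = i + t + 1 from by omega]
        rw [show i + n + t = i + t + 1 + n - 1 from by omega]
        rw [keyEq2 hy1 (show i < i + t + 1 by omega) z a]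
        rw [smul_smul, ← pow_add]
        rw [show (n + 1) * (p + 1) + ((n + 1) * i + (p + 1) * (i + t + 1))
            = ((p + 1) * (i + t + 1 + n - 1) + (n + 1) * i) + 2 * (p + 1) from by
          rw [show i + t + 1 + n - 1 = i + t + n from by omega]; ring]
        rw [negpow_add_two_mul]
    rw [Finset.sum_congr rfl reidx]
    simp only [← Finset.smul_sum]
    congr 1
    rw [tri]
    rfl
  rw [hlow, hmid, hup]
  abel

end LemA

end AuxGerst

/-- The Gerstenhaber bracket satisfies the graded Jacobi
identity with respect to shifted degrees: for all `x ∈ C^m(A,A)`,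
`y ∈ C^n(A,A)`, `z ∈ C^p(A,A)`,
`[x,[y,z]] = [[x,y],z] + (−1)^{(m−1)(n−1)} [y,[x,z]]`, together with the graded
antisymmetry `[x,y] = −(−1)^{(m−1)(n−1)}[y,x]`; this makes the desuspended
Hochschild complex `C^{•+1}(A,A)` a graded Lie algebra. -/
theorem gerstenhaber_bracket_graded_jacobi_antisymm
    {K A : Type*} [Field K] [Ring A] [Algebra K A]
    (m n p : ℕ) (x y z : (ℕ → A) → A)
    (hx : IsCochain K m x) (hy : IsCochain K n y) (hz : IsCochain K p z) :
    (gbr m (n + p - 1) x (gbr n p y z) = fun a =>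
      gbr (m + n - 1) p (gbr m n x y) z a
        + ((-1 : ℤ) ^ ((m + 1) * (n + 1))) • gbr n (m + p - 1) y (gbr m p x z) a)
    ∧ gbr m n x y = fun a => -(((-1 : ℤ) ^ ((m + 1) * (n + 1))) • gbr n m y x a) := by
  constructor
  · funext a
    simp only [gbr]
    rw [show gbr n p y z = fun b => circ n p y z b - ((-1:ℤ)^((n+1)*(p+1))) • circ p n z y b
          from rfl,
        show gbr m n x y = fun b => circ m n x y b - ((-1:ℤ)^((m+1)*(n+1))) • circ n m y x b
          from rfl,
        show gbr m p x z = fun b => circ m p x z b - ((-1:ℤ)^((m+1)*(p+1))) • circ p m z x b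
          from rfl]
    rw [circ_right_sub (n+p-1) hx (circ n p y z) (circ p n z y) _ a,
        circ_left_sub (n+p-1) m (circ n p y z) (circ p n z y) _ x a,
        circ_left_sub (m+n-1) p (circ m n x y) (circ n m y x) _ z a,
        circ_right_sub (m+n-1) hz (circ m n x y) (circ n m y x) _ a,
        circ_right_sub (m+p-1) hy (circ m p x z) (circ p m z x) _ a,
        circ_left_sub (m+p-1) n (circ m p x z) (circ p m z x) _ y a]
    have A1 := lemA hx n p hy.1 z a
    have A2 := lemA hy m p hx.1 z a
    have A3 := lemA hy p m hz.1 x a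
    have A4 := lemA hz n m hy.1 x a
    have A5 := lemA hx p n hz.1 y a
    have A6 := lemA hz m n hx.1 y a
    rw [show n+m-1 = m+n-1 from by omega] at A2
    rw [show p+m-1 = m+p-1 from by omega,
        show (p+1)*(m+1) = (m+1)*(p+1) from by ring] at A3
    rw [show p+n-1 = n+p-1 from by omega, show n+m-1 = m+n-1 from by omega,
        show (n+1)*(m+1) = (m+1)*(n+1) from by ring] at A4
    rw [show p+n-1 = n+p-1 from by omega,
        show (p+1)*(n+1) = (n+1)*(p+1) from by ring] at A5
    rw [show p+m-1 = m+p-1 from by omega] at A6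
    rw [A1, A2, A3, A4, A5, A6]
    by_cases hnp : n = 0 ∧ p = 0
    · obtain ⟨rfl, rfl⟩ := hnp
      have hS1 : circ m (0+0-1) x (circ 0 0 y z) a = 0 :=
        circ_right_zero _ hx (fun b => circ_zero_outer _ _ _ b) a
      have hS2 : circ m (0+0-1) x (circ 0 0 z y) a = 0 :=
        circ_right_zero _ hx (fun b => circ_zero_outer _ _ _ b) a
      rw [hS1, hS2]
      simp only [circ_zero_outer, PP_zero]
      rcases Nat.eq_zero_or_pos m with rfl | hm1
      · simp [PP_zero]
      · simp only [smul_zero, sub_zero, zero_sub, add_zero, zero_add, neg_zero, smul_neg,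
          neg_neg, one_mul, mul_one, pow_one]
        rw [smul_smul, ← pow_add, show (m+1) + (m-1+1) = 2*m+1 from by omega, pow_succ,
          pow_mul, neg_one_sq, one_pow, one_mul]
        module
    · by_cases hmn : m = 0 ∧ n = 0
      · obtain ⟨rfl, rfl⟩ := hmn
        have hS5 : circ p (0+0-1) z (circ 0 0 x y) a = 0 :=
          circ_right_zero _ hz (fun b => circ_zero_outer _ _ _ b) a
        have hS6 : circ p (0+0-1) z (circ 0 0 y x) a = 0 :=
          circ_right_zero _ hz (fun b => circ_zero_outer _ _ _ b) a
        rw [hS5, hS6]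
        simp only [circ_zero_outer, PP_zero]
        simp only [smul_zero, sub_zero, zero_sub, add_zero, zero_add, neg_zero, smul_neg,
          neg_neg, one_mul, mul_one, pow_one]
        module
      · by_cases hmp : m = 0 ∧ p = 0
        · obtain ⟨rfl, rfl⟩ := hmp
          have hS3 : circ n (0+0-1) y (circ 0 0 x z) a = 0 :=
            circ_right_zero _ hy (fun b => circ_zero_outer _ _ _ b) a
          have hS4 : circ n (0+0-1) y (circ 0 0 z x) a = 0 :=
            circ_right_zero _ hy (fun b => circ_zero_outer _ _ _ b) a
          rw [hS3, hS4]
          simp only [circ_zero_outer, PP_zero]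
          simp only [smul_zero, sub_zero, zero_sub, add_zero, zero_add, neg_zero, smul_neg,
            neg_neg, one_mul, mul_one, pow_one]
          have hn1 : 0 < n := by omega
          rw [show n-1+1 = n from by omega, pow_succ]
          module
        · rw [show n+p-1+1 = n+p from by omega, show m+n-1+1 = m+n from by omega,
              show m+p-1+1 = m+p from by omega]
          have hc1 : ((-1:ℤ))^((m+1)*(n+p))
              = (-1:ℤ)^((m+1)*(n+1)) * (-1:ℤ)^((m+1)*(p+1)) := by
            rw [← pow_add,
              show (m+1)*(n+1) + (m+1)*(p+1) = (m+1)*(n+p) + 2*(m+1) from by ring,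
              negpow_add_two_mul]
          have hc2 : ((-1:ℤ))^((m+n)*(p+1))
              = (-1:ℤ)^((n+1)*(p+1)) * (-1:ℤ)^((m+1)*(p+1)) := by
            rw [← pow_add,
              show (n+1)*(p+1) + (m+1)*(p+1) = (m+n)*(p+1) + 2*(p+1) from by ring,
              negpow_add_two_mul]
          have hc3 : ((-1:ℤ))^((n+1)*(m+p))
              = (-1:ℤ)^((m+1)*(n+1)) * (-1:ℤ)^((n+1)*(p+1)) := by
            rw [← pow_add,
              show (m+1)*(n+1) + (n+1)*(p+1) = (n+1)*(m+p) + 2*(n+1) from by ring,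
              negpow_add_two_mul]
          rw [hc1, hc2, hc3]
          obtain hm | hm := Nat.even_or_odd m <;> obtain hn | hn := Nat.even_or_odd n <;>
            obtain hp2 | hp2 := Nat.even_or_odd p <;>
            simp only [Nat.even_iff, Nat.odd_iff] at hm hn hp2 <;>
            rw [sgn_tab hm hn, sgn_tab hn hp2, sgn_tab hm hp2] <;>
            norm_num <;> abel
  · funext a
    simp only [gbr]
    rw [smul_sub, smul_smul, ← pow_add,
      show (m+1)*(n+1) + (n+1)*(m+1) = 2*((m+1)*(n+1)) from by ring,
      show ((-1:ℤ))^(2*((m+1)*(n+1))) = 1 from by rw [pow_mul, neg_one_sq, one_pow],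
      one_smul]
    abel

end Hochschild
end
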